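/- For every finite simple connected graph G and every field F, the well-covered dimension of G over F is at least the simplicial clique number: wcdim(G, F) ≥ sc(G). -/

import Mathlib

open Finset

open scoped Classical

/-- The closed neighborhood `N[v]` of a vertex `v`: `v` together with its neighbors. -/
noncomputable def clNbhd {V : Type*} [Fintype V] (G : SimpleGraph V) (v : V) : Finset V :=
  univ.filter (fun u => u = v ∨ G.Adj v u)

/-- The closed neighborhood `N[s]` of a finite set `s` of vertices. -/
noncomputable def clNbhdSet {V : Type*} [Fintype V] (G : SimpleGraph V) (s : Finset V) : Finset V :=
  s.biUnion (clNbhd G)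

/-- A maximal clique of a graph: a clique not properly contained in any other clique. -/
def IsMaxClique {V : Type*} (G : SimpleGraph V) (C : Finset V) : Prop :=
  G.IsClique (C : Set V) ∧ ∀ D : Finset V, G.IsClique (D : Set V) → C ⊆ D → D = C

/-- A vertex is simplicial if its closed neighborhood is a maximal clique. -/
def IsSimplicialVertex {V : Type*} [Fintype V] (G : SimpleGraph V) (v : V) : Prop :=
  IsMaxClique G (clNbhd G v)

/-- A simplicial clique: a maximal clique containing at least one simplicial vertex. -/
def IsSimplicialClique {V : Type*} [Fintype V] (G : SimpleGraph V) (C : Finset V) : Prop :=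
  IsMaxClique G C ∧ ∃ v ∈ C, IsSimplicialVertex G v

/-- The set `C(G)` of simplicial cliques of `G`. -/
noncomputable def simpCliques {V : Type*} [Fintype V] (G : SimpleGraph V) : Finset (Finset V) :=
  univ.filter (fun C => IsSimplicialClique G C)

/-- The simplicial clique number `sc(G) = |C(G)|`. -/
noncomputable def scNum {V : Type*} [Fintype V] (G : SimpleGraph V) : ℕ :=
  (simpCliques G).card

/-- A simplicial clique covered graph (SCCG): `C(G)` is nonempty and the union of the
simplicial cliques is the whole vertex set. -/
def IsSCCG {V : Type*} [Fintype V] (G : SimpleGraph V) : Prop :=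
  (simpCliques G).Nonempty ∧ ∀ v : V, ∃ C ∈ simpCliques G, v ∈ C

/-- The connection set `W` of `G`: vertices belonging to at least two simplicial cliques. -/
noncomputable def connSet {V : Type*} [Fintype V] (G : SimpleGraph V) : Finset V :=
  univ.filter (fun v => 1 < ((simpCliques G).filter (fun C => v ∈ C)).card)

/-- `S(I)`: the set of simplicial cliques not contained in the closed neighborhood `N[I]`. -/
noncomputable def sFam {V : Type*} [Fintype V] (G : SimpleGraph V) (I : Finset V) :
    Finset (Finset V) :=
  (simpCliques G).filter (fun C => ¬ C ⊆ clNbhdSet G I)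

/-- An independent set of vertices: no two of its vertices are adjacent. -/
def IsIndep {V : Type*} (G : SimpleGraph V) (s : Finset V) : Prop :=
  ∀ u ∈ s, ∀ w ∈ s, ¬ G.Adj u w

/-- A maximal independent set: an independent set not properly contained in any
other independent set. -/
def IsMaxIndep {V : Type*} (G : SimpleGraph V) (s : Finset V) : Prop :=
  IsIndep G s ∧ ∀ t : Finset V, IsIndep G t → s ⊆ t → t = s

/-- A well-covered weighting: a weighting whose sum over every maximal independent set
is the same. -/
def IsWCW {V : Type*} (G : SimpleGraph V) {F : Type*} [Field F] (f : V → F) : Prop :=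
  ∀ s t : Finset V, IsMaxIndep G s → IsMaxIndep G t →
    ∑ v ∈ s, f v = ∑ v ∈ t, f v

/-- The well-covered space of `G` over `F`: the `F`-vector space of well-covered
weightings of `G`. -/
noncomputable def wcSpace {V : Type*} (G : SimpleGraph V) (F : Type*) [Field F] :
    Submodule F (V → F) where
  carrier := {f | IsWCW G f}
  zero_mem' := by
    intro s t _ _
    simp
  add_mem' := by
    intro f g hf hg
    simp only [Set.mem_setOf_eq] at hf hg ⊢
    intro s t hs ht
    simp only [Pi.add_apply, Finset.sum_add_distrib]
    rw [hf s t hs ht, hg s t hs ht]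
  smul_mem' := by
    intro c f hf
    simp only [Set.mem_setOf_eq] at hf ⊢
    intro s t hs ht
    simp only [Pi.smul_apply, smul_eq_mul, ← Finset.mul_sum]
    rw [hf s t hs ht]

/-- The well-covered dimension `wcdim(G, F)`. -/
noncomputable def wcdim {V : Type*} (G : SimpleGraph V) (F : Type*) [Field F] : ℕ :=
  Module.finrank F (wcSpace G F)

/-! Each simplicial clique `C = N[v]` meets every maximal independent set in exactly one vertex:
in at most one because `C` is a clique, and in at least one because a maximal independent set
dominates `v`. Hence the indicator of `C` is a well-covered weighting. A simplicial vertex lies in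
a unique maximal clique, so choosing one in each simplicial clique gives a vertex on which exactly
one of these indicators is nonzero, which makes them linearly independent. -/

theorem linearIndependent_of_apply_eq_ite {ι X R : Type*} [Semiring R] [DecidableEq ι]
    (f : ι → X → R) (p : ι → X) (h : ∀ i j, f i (p j) = if j = i then 1 else 0) :
    LinearIndependent R f := by
  refine .of_comp (LinearMap.funLeft R R p) ?_
  convert Pi.linearIndependent_single_one ι R with i
  ext j
  simp [h, Pi.single_apply]

section

variable {V : Type*} {G : SimpleGraph V}

lemma IsIndep.card_inter_le_one {s C : Finset V} (hs : IsIndep G s)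
    (hC : G.IsClique (C : Set V)) : #(s ∩ C) ≤ 1 := by
  refine card_le_one.2 fun a ha b hb => by_contra fun hab => ?_
  rw [mem_inter] at ha hb
  exact hs a ha.1 b hb.1 (hC ha.2 hb.2 hab)

variable [Fintype V]

lemma mem_clNbhd {u v : V} : u ∈ clNbhd G v ↔ u = v ∨ G.Adj v u := by
  simp [clNbhd]

lemma IsMaxClique.eq_clNbhd {C : Finset V} {v : V} (hC : IsMaxClique G C)
    (hv : IsSimplicialVertex G v) (hvC : v ∈ C) : C = clNbhd G v :=
  (hC.2 _ hv.1 fun u hu =>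
    mem_clNbhd.2 <| (eq_or_ne u v).imp_right fun h => hC.1 hvC hu h.symm).symm

lemma IsSimplicialVertex.eq_of_mem {C D : Finset V} {v : V} (hv : IsSimplicialVertex G v)
    (hC : IsMaxClique G C) (hD : IsMaxClique G D) (hvC : v ∈ C) (hvD : v ∈ D) : C = D :=
  (hC.eq_clNbhd hv hvC).trans (hD.eq_clNbhd hv hvD).symm

lemma IsMaxIndep.exists_mem_clNbhd {s : Finset V} (hs : IsMaxIndep G s) (v : V) :
    ∃ u ∈ s, u ∈ clNbhd G v := by
  by_contra! h
  have hvs : v ∉ s := fun hvs => h v hvs (mem_clNbhd.2 (.inl rfl))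
  have hind : IsIndep G (insert v s) := by
    simp only [IsIndep, mem_insert]
    rintro u (rfl | hu) w (rfl | hw) huw
    · exact G.irrefl huw
    · exact h w hw (mem_clNbhd.2 (.inr huw))
    · exact h u hu (mem_clNbhd.2 (.inr huw.symm))
    · exact hs.1 u hu w hw huw
  exact hvs (hs.2 _ hind (subset_insert v s) ▸ mem_insert_self v s)

lemma IsMaxIndep.card_inter_eq_one {s C : Finset V} (hs : IsMaxIndep G s)
    (hC : IsSimplicialClique G C) : #(s ∩ C) = 1 := by
  obtain ⟨hCmax, v, hvC, hv⟩ := hC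
  refine le_antisymm (hs.1.card_inter_le_one hCmax.1) (one_le_card.2 ?_)
  obtain ⟨u, hus, huv⟩ := hs.exists_mem_clNbhd v
  exact ⟨u, mem_inter.2 ⟨hus, hCmax.eq_clNbhd hv hvC ▸ huv⟩⟩

lemma IsSimplicialClique.isWCW_indicator {F : Type*} [Field F] {C : Finset V}
    (hC : IsSimplicialClique G C) : IsWCW G (fun v => if v ∈ C then (1 : F) else 0) := by
  intro s t hs ht
  simp only [sum_boole, filter_mem_eq_inter, hs.card_inter_eq_one hC, ht.card_inter_eq_one hC]

end

theorem wcdim_ge_sc_general {V : Type*} [Fintype V] (G : SimpleGraph V)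
    (F : Type*) [Field F] :
    scNum G ≤ wcdim G F := by
  have hC (C : simpCliques G) : IsSimplicialClique G C := (mem_filter.1 C.2).2
  choose p hpC hp using fun C : simpCliques G => (hC C).2
  let e (C : simpCliques G) : wcSpace G F := ⟨_, (hC C).isWCW_indicator⟩
  have he : LinearIndependent F e := by
    refine .of_comp (wcSpace G F).subtype (linearIndependent_of_apply_eq_ite _ p fun C D => ?_)
    have hpD : p D ∈ (C : Finset V) ↔ D = C :=
      ⟨fun h => Subtype.ext ((hp D).eq_of_mem (hC D).1 (hC C).1 (hpC D) h),
        fun h => h ▸ hpC D⟩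
    simp [e, hpD]
  simpa [scNum, wcdim] using he.fintype_card_le_finrank

/-- For every finite simple connected graph `G` and every field `F`,
`wcdim(G, F) ≥ sc(G)`. -/
theorem wcdim_ge_sc {V : Type*} [Fintype V] (G : SimpleGraph V) (hconn : G.Connected)
    (F : Type*) [Field F] :
    scNum G ≤ wcdim G F :=
  wcdim_ge_sc_general G F
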